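/- arXiv:2401.16342 — 3 statements merged into one kernel-verified Lean document; each statement's English description precedes it below -/
import Mathlib

section
/- Concentration of the number of true islands (Lemma 1): Fix constants c > 0, L̄ > 0 and δ ∈ [0,1), and work in the asymptotic regime of the SSE model. Let K′ denote the number of true islands. Then for every ε > 0, Pr( |K′ − K(n)·e^{−c}| ≥ ε·K(n)·e^{−c} ) → 0 as n → ∞. -/
open Filter

noncomputable section

/-- Index family for the joint independence of starts and erasure indicators. -/
def sseType (n K L : ℕ) : Fin K ⊕ (Fin K × Fin L) → Type
  | .inl _ => ZMod n
  | .inr _ => Bool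

/-- Measurable-space structure on the index family (discrete σ-algebras). -/
def sseTypeMS (n K L : ℕ) : ∀ t : Fin K ⊕ (Fin K × Fin L), MeasurableSpace (sseType n K L t)
  | .inl _ => inferInstanceAs (MeasurableSpace (ZMod n))
  | .inr _ => inferInstanceAs (MeasurableSpace Bool)

/-- The combined family of random variables (starts and erasure indicators). -/
def sseVars {Ω : Type} {n K L : ℕ} (S : Fin K → Ω → ZMod n) (E : Fin K → Fin L → Ω → Bool) :
    ∀ t : Fin K ⊕ (Fin K × Fin L), Ω → sseType n K L t
  | .inl i => S i
  | .inr p => E p.1 p.2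

/-- The shotgun-sequencing-with-erasures (SSE) probabilistic model:
start positions `S 1, …, S K` i.i.d. uniform on `ZMod n`, erasure indicators `E i j`
i.i.d. Bernoulli(δ), with all of them jointly independent. -/
structure SSE (n K L : ℕ) (δ : ℝ) where
  Ω : Type
  [mΩ : MeasurableSpace Ω]
  μ : MeasureTheory.Measure Ω
  isProb : MeasureTheory.IsProbabilityMeasure μ
  S : Fin K → Ω → ZMod n
  E : Fin K → Fin L → Ω → Bool
  measS : ∀ i, Measurable (S i)
  measE : ∀ i j, Measurable (E i j)
  unifS : ∀ i s, μ {ω | S i ω = s} = (n : ENNReal)⁻¹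
  bernE : ∀ i j, μ {ω | E i j ω = true} = ENNReal.ofReal δ
  indep : ProbabilityTheory.iIndepFun (m := sseTypeMS n K L) (sseVars S E) μ

attribute [instance] SSE.mΩ
attribute [instance] SSE.isProb

/-- SSE model together with a uniformly random input string, independent of the
starts and erasures. -/
structure SSEX (n K L : ℕ) (δ : ℝ) extends SSE n K L δ where
  X : Ω → (ZMod n → Bool)
  measX : Measurable X
  unifX : ∀ v : ZMod n → Bool, μ {ω | X ω = v} = ((2 : ENNReal) ^ n)⁻¹
  indepX : ProbabilityTheory.IndepFun X (fun ω => (fun i => S i ω, fun i j => E i j ω)) μ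

/-- SSE model together with a uniformly random message `W` on `{1,…,Mn}`
(modelled as `Fin Mn`), independent of the starts and erasures. -/
structure SSEW (n K L : ℕ) (δ : ℝ) (Mn : ℕ) extends SSE n K L δ where
  W : Ω → Fin Mn
  measW : Measurable W
  unifW : ∀ w, μ {ω | W ω = w} = (Mn : ENNReal)⁻¹
  indepW : ProbabilityTheory.IndepFun W (fun ω => (fun i => S i ω, fun i j => E i j ω)) μ

variable {n K L : ℕ} {δ : ℝ}

/-- Read `i`: the `L`-length cyclic substring of `x` starting at `S i`, with erased
symbols replaced by `none` (= ⊥). -/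
def SSE.read (M : SSE n K L δ) (x : ZMod n → Bool) (ω : M.Ω) (i : Fin K) :
    Fin L → Option Bool :=
  fun j => if M.E i j ω then none else some (x (M.S i ω + ((j : ℕ) : ZMod n)))

/-- The channel output: the multiset of the `K` reads. -/
def SSE.output (M : SSE n K L δ) (x : ZMod n → Bool) (ω : M.Ω) :
    Multiset (Fin L → Option Bool) :=
  Finset.univ.val.map (M.read x ω)

/-- Position `m` is visibly covered: some read covers it with an unerased symbol. -/
def SSE.VisiblyCovered (M : SSE n K L δ) (ω : M.Ω) (m : ZMod n) : Prop :=
  ∃ (i : Fin K) (j : Fin L), M.S i ω + ((j : ℕ) : ZMod n) = m ∧ M.E i j ω = false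

/-- The number 𝒫 of visibly covered positions. -/
def SSE.coveredCount (M : SSE n K L δ) (ω : M.Ω) : ℕ :=
  Set.ncard {m : ZMod n | M.VisiblyCovered ω m}

/-- The visible coverage Φ_v: the fraction of the `n` positions that are visibly covered. -/
def SSE.Phi (M : SSE n K L δ) (ω : M.Ω) : ℝ := (M.coveredCount ω : ℝ) / n

/-- The number of true islands: the number of reads `i` such that no other read `j`
has its start in the cyclic window `{S i, S i + 1, …, S i + L - 1}`. -/
def SSE.trueIslandCount (M : SSE n K L δ) (ω : M.Ω) : ℕ :=
  (Finset.univ.filter (fun i : Fin K =>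
    ∀ j : Fin K, j ≠ i → ∀ l : Fin L, M.S j ω ≠ M.S i ω + ((l : ℕ) : ZMod n))).card

/-- Cyclic distance from read `i` to read `j` in the true ordering
(reads ordered cyclically by start position, ties broken by index). -/
def SSE.dist (M : SSE n K L δ) (ω : M.Ω) (i j : Fin K) : ℕ :=
  if (M.S j ω - M.S i ω).val = 0 then (if i < j then 0 else n)
  else (M.S j ω - M.S i ω).val

/-- The cyclic gap `g_i` from the start of read `i` to the start of its true successor. -/
def SSE.trueGap (M : SSE n K L δ) (ω : M.Ω) (i : Fin K) : ℕ :=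
  if h : (Finset.univ.erase i).Nonempty then
    ((Finset.univ.erase i).image (fun j => M.dist ω i j)).min' (h.image _)
  else n

/-- The true overlap `o_i = max (0, L − g_i)` of read `i` with its true successor. -/
def SSE.trueOverlap (M : SSE n K L δ) (ω : M.Ω) (i : Fin K) : ℕ := L - M.trueGap ω i

/-- The true merging suffix size `ω^t_i`: the number of unerased symbols among the last
`o_i` symbols of read `i` (`0` if `o_i = 0`). -/
def SSE.suffixSize (M : SSE n K L δ) (ω : M.Ω) (i : Fin K) : ℕ :=
  (Finset.univ.filter (fun j : Fin L =>
    L - M.trueOverlap ω i ≤ (j : ℕ) ∧ M.E i j ω = false)).card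

open Classical in
/-- `G(τ)`: the number of reads whose true merging suffix size equals `τ·log₂ n`. -/
def SSE.G (M : SSE n K L δ) (ω : M.Ω) (τ : ℝ) : ℕ :=
  (Finset.univ.filter (fun i : Fin K =>
    (M.suffixSize ω i : ℝ) = τ * Real.logb 2 n)).card

/-- Read length in the asymptotic regime: `L(n) = ⌈Lbar log₂ n⌉`. -/
def Lof (Lbar : ℝ) (n : ℕ) : ℕ := ⌈Lbar * Real.logb 2 n⌉₊

/-- Number of reads in the asymptotic regime: `K(n) = ⌈c n / L(n)⌉`. -/
def Kof (c Lbar : ℝ) (n : ℕ) : ℕ := ⌈c * (n : ℝ) / (Lof Lbar n : ℝ)⌉₊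

/-- `z` (a string with erasures, `none` = ⊥) matches `x` at position `s`: every unerased
symbol of `z` agrees with the corresponding (cyclic) symbol of `x`. -/
def ZMatches {n : ℕ} (x : ZMod n → Bool) {l : ℕ} (z : Fin l → Option Bool)
    (s : ZMod n) : Prop :=
  ∀ (j : Fin l) (b : Bool), z j = some b → x (s + ((j : ℕ) : ZMod n)) = b

open Classical in
/-- `M_z`: the number of reads whose window matches `z`. -/
def SSEX.Mz (M : SSEX n K L δ) (ω : M.Ω) {l : ℕ} (z : Fin l → Option Bool) : ℕ :=
  (Finset.univ.filter (fun i : Fin K => ZMatches (M.X ω) z (M.S i ω))).card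

/-- `size(z)`: the number of unerased symbols of `z`. -/
def sizeZ {l : ℕ} (z : Fin l → Option Bool) : ℕ :=
  (Finset.univ.filter (fun j : Fin l => z j ≠ none)).card

/-- `τ_ue(z) = size(z) / log₂ n`. -/
def tauUE (n : ℕ) {l : ℕ} (z : Fin l → Option Bool) : ℝ :=
  (sizeZ z : ℝ) / Real.logb 2 n

/-- The probability of a decoding error for a given encoder/decoder pair, when the
transmitted codeword is `enc W`. -/
def SSEW.errProb {n K L : ℕ} {δ : ℝ} {Mn : ℕ} (M : SSEW n K L δ Mn)
    (enc : Fin Mn → (ZMod n → Bool))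
    (dec : Multiset (Fin L → Option Bool) → Fin Mn) : ℝ :=
  (M.μ {ω | dec (M.toSSE.output (enc (M.W ω)) ω) ≠ M.W ω}).toReal

/-- The β(d) penalty function, with `α = c/(Lbar(1−δ))`. -/
def betaFn (c Lbar δ : ℝ) (d : ℝ) : ℝ :=
  (d / (1 - δ)) * (c / Lbar) ^ 2 * Real.exp (-c) *
    (Real.exp (c / (Lbar * (1 - δ)) * d) * (Real.exp (c / (Lbar * (1 - δ))) - 1) /
        (Real.exp (c / (Lbar * (1 - δ)) * d) - 1) -
      Real.exp (2 * (c / (Lbar * (1 - δ))) * d) *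
          ((Real.exp (c / (Lbar * (1 - δ)) * (1 + d)) - Real.exp (c / (Lbar * (1 - δ)))) -
            d * (Real.exp (c / (Lbar * (1 - δ)) * (1 + d)) - 1)) /
        (Real.exp (c / (Lbar * (1 - δ)) * d) - 1) ^ 2)

/-!
Write the number of true islands as `∑ i, 1_{A i}`, where `A i` says that no other start falls
in the window of read `i`. Conditioning on the start of read `i` and using independence of the
starts, `P(A i) = (1 - L/n)^(K-1)`; for `i ≠ j` the windows of two islands are disjoint, so
`P(A i ∩ A j) ≤ (1 - 2L/n)^(K-2)`. Since `L/n → 0` and `K L/n → c`, these tend to `e^{-c}` and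
`e^{-2c}`, so the second moment of the count about `K e^{-c}` is `o(K²)`, and Markov's
inequality for its square gives the concentration.
-/

open MeasureTheory ProbabilityTheory Finset Topology Real

lemma Finset.prod_comp_update_of_mem {ι α M : Type*} [DecidableEq ι] [CommMonoid M]
    {s : Finset ι} {i : ι} (hi : i ∈ s) (g : α → M) (F : ι → α) (a : α) :
    ∏ j ∈ s, g (Function.update F i a j) = g a * ∏ j ∈ s \ {i}, g (F j) := by
  simp only [← Function.comp_apply (f := g), Function.comp_update, prod_update_of_mem hi]

section SecondMoment

variable {Ω ι : Type*} [MeasurableSpace Ω] {μ : Measure Ω} [Fintype ι] {A : ι → Set Ω}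

lemma integral_sum_indicator_sub_sq [IsProbabilityMeasure μ] (hA : ∀ i, MeasurableSet (A i))
    (m : ℝ) :
    ∫ ω, (∑ i, (A i).indicator 1 ω - m) ^ 2 ∂μ =
      ∑ i, ∑ j, μ.real (A i ∩ A j) - 2 * m * ∑ i, μ.real (A i) + m ^ 2 := by
  have hind : ∀ s, MeasurableSet s → Integrable (s.indicator (1 : Ω → ℝ)) μ :=
    fun s hs => (integrable_const 1).indicator hs
  have hrow : ∀ i, Integrable (fun ω => ∑ j, (A i ∩ A j).indicator (1 : Ω → ℝ) ω) μ :=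
    fun i => integrable_finsetSum univ fun j _ => hind _ ((hA i).inter (hA j))
  have hsum₁ := integrable_finsetSum univ fun i _ => hind _ (hA i)
  have hsum₂ := integrable_finsetSum univ fun i _ => hrow i
  have hexpand : ∀ ω, (∑ i, (A i).indicator (1 : Ω → ℝ) ω - m) ^ 2 =
      ∑ i, ∑ j, (A i ∩ A j).indicator 1 ω - 2 * m * ∑ i, (A i).indicator 1 ω + m ^ 2 := by
    intro ω
    simp only [Set.inter_indicator_one, Pi.mul_apply, ← sum_mul_sum]
    ring
  simp_rw [hexpand]
  rw [integral_add ?_ (integrable_const _), integral_sub hsum₂ (hsum₁.const_mul _),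
    integral_const_mul, integral_finsetSum _ fun i _ => hind _ (hA i),
    integral_finsetSum _ fun i _ => hrow i]
  · simp only [integral_finsetSum _ fun j _ => hind _ ((hA _).inter (hA j)),
      integral_indicator_one ((hA _).inter (hA _)), integral_indicator_one (hA _), integral_const,
      probReal_univ, smul_eq_mul, one_mul]
  · exact hsum₂.sub (hsum₁.const_mul _)

lemma sum_sum_measureReal_inter_le {p q : ℝ} (hp : ∀ i, μ.real (A i) = p)
    (hq : ∀ i j, i ≠ j → μ.real (A i ∩ A j) ≤ q) :
    ∑ i, ∑ j, μ.real (A i ∩ A j) ≤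
      Fintype.card ι * p + Fintype.card ι * (Fintype.card ι - 1) * q := by
  classical
  calc ∑ i, ∑ j, μ.real (A i ∩ A j)
      ≤ ∑ _i : ι, (p + (Fintype.card ι - 1) * q) := sum_le_sum fun i _ => by
        rw [← add_sum_erase _ _ (mem_univ i), Set.inter_self, hp,
          ← Nat.cast_pred (Fintype.card_pos_iff.2 ⟨i⟩), ← card_univ,
          ← card_erase_of_mem (mem_univ i), ← nsmul_eq_mul, ← sum_const]
        gcongr with j hj
        exact hq i j (ne_of_mem_erase hj).symm
    _ = _ := by
        rw [sum_const, card_univ, nsmul_eq_mul]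
        ring

lemma measureReal_le_abs_sum_indicator_sub_le [IsProbabilityMeasure μ]
    (hA : ∀ i, MeasurableSet (A i)) {p q : ℝ} (hp : ∀ i, μ.real (A i) = p)
    (hq : ∀ i j, i ≠ j → μ.real (A i ∩ A j) ≤ q) (m : ℝ) {a : ℝ} (ha : 0 < a) :
    μ.real {ω | a ≤ |∑ i, (A i).indicator 1 ω - m|} ≤
      (Fintype.card ι * p + Fintype.card ι * (Fintype.card ι - 1) * q
        - 2 * m * Fintype.card ι * p + m ^ 2) / a ^ 2 := by
  have hsq : {ω | a ≤ |∑ i, (A i).indicator 1 ω - m|} =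
      {ω | a ^ 2 ≤ (∑ i, (A i).indicator (1 : Ω → ℝ) ω - m) ^ 2} := by
    ext ω
    rw [Set.mem_ofPred_eq, Set.mem_ofPred_eq, ← sq_le_sq₀ ha.le (abs_nonneg _), sq_abs]
  have hint : Integrable (fun ω => (∑ i, (A i).indicator (1 : Ω → ℝ) ω - m) ^ 2) μ :=
    ((memLp_finsetSum univ fun i _ =>
      memLp_indicator_const 2 (hA i) (1 : ℝ) (Or.inr (measure_ne_top _ _))).sub
        (memLp_const m)).integrable_sq
  rw [hsq, le_div_iff₀ (by positivity), mul_comm]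
  refine (mul_meas_ge_le_integral_of_nonneg (ae_of_all _ fun ω => sq_nonneg _) hint _).trans ?_
  rw [integral_sum_indicator_sub_sq hA]
  simp only [hp, sum_const, card_univ, nsmul_eq_mul]
  linarith [sum_sum_measureReal_inter_le hp hq (μ := μ)]

end SecondMoment

section Limits

lemma exp_neg_div_one_sub_le {x : ℝ} (hx : x < 1) : exp (-(x / (1 - x))) ≤ 1 - x := by
  have h1x : 0 < 1 - x := by linarith
  rw [exp_neg, inv_le_comm₀ (exp_pos _) h1x]
  calc (1 - x)⁻¹ = x / (1 - x) + 1 := by field_simp; ring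
    _ ≤ exp (x / (1 - x)) := add_one_le_exp _

variable {α : Type*} {l : Filter α} {x : α → ℝ} {k : α → ℕ} {a : ℝ}

lemma tendsto_one_sub_pow_of_tendsto_mul (hx : Tendsto x l (𝓝 0))
    (hkx : Tendsto (fun t => k t * x t) l (𝓝 a)) :
    Tendsto (fun t => (1 - x t) ^ k t) l (𝓝 (exp (-a))) := by
  have hlt : ∀ᶠ t in l, x t < 1 := hx.eventually_lt_const one_pos
  have hlower : Tendsto (fun t => exp (-(k t * x t / (1 - x t)))) l (𝓝 (exp (-a))) := by
    have h := hkx.div (tendsto_const_nhds.sub hx) (by norm_num : (1 : ℝ) - 0 ≠ 0)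
    rw [sub_zero, div_one] at h
    exact (continuous_exp.tendsto _).comp h.neg
  have hupper : Tendsto (fun t => exp (-(k t * x t))) l (𝓝 (exp (-a))) :=
    (continuous_exp.tendsto _).comp hkx.neg
  refine tendsto_of_tendsto_of_tendsto_of_le_of_le' hlower hupper ?_ ?_
  · filter_upwards [hlt] with t ht
    calc exp (-(k t * x t / (1 - x t))) = exp (-(x t / (1 - x t))) ^ k t := by
          rw [← exp_nat_mul]; ring_nf
      _ ≤ (1 - x t) ^ k t := pow_le_pow_left₀ (exp_nonneg _) (exp_neg_div_one_sub_le ht) _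
  · filter_upwards [hlt] with t ht
    calc (1 - x t) ^ k t ≤ exp (-x t) ^ k t :=
          pow_le_pow_left₀ (by linarith) (one_sub_le_exp_neg _) _
      _ = exp (-(k t * x t)) := by rw [← exp_nat_mul]; ring_nf

lemma tendsto_natSub_mul_of_tendsto_mul {m : ℕ} (hk : ∀ᶠ t in l, m ≤ k t)
    (hx : Tendsto x l (𝓝 0)) (hkx : Tendsto (fun t => k t * x t) l (𝓝 a)) :
    Tendsto (fun t => ((k t - m : ℕ) : ℝ) * x t) l (𝓝 a) := by
  have h := hkx.sub (hx.const_mul (m : ℝ))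
  rw [mul_zero, sub_zero] at h
  refine h.congr' ?_
  filter_upwards [hk] with t ht
  rw [Nat.cast_sub ht]
  ring

lemma tendsto_second_moment_bound_div_sq {p q K : α → ℝ} {e ε : ℝ} (hp : Tendsto p l (𝓝 e))
    (hq : Tendsto q l (𝓝 (e ^ 2))) (hK : Tendsto K l atTop) :
    Tendsto (fun t => (p t / K t + (1 - 1 / K t) * q t - 2 * e * p t + e ^ 2) / (ε * e) ^ 2) l
      (𝓝 0) := by
  have hK0 : Tendsto (fun t => 1 / K t) l (𝓝 0) := tendsto_const_nhds.div_atTop hK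
  have h := ((((hp.div_atTop hK).add (((tendsto_const_nhds (x := (1 : ℝ))).sub hK0).mul hq)).sub
    (hp.const_mul (2 * e))).add_const (e ^ 2)).div_const ((ε * e) ^ 2)
  rwa [show (0 + (1 - 0) * e ^ 2 - 2 * e * e + e ^ 2) / (ε * e) ^ 2 = (0 : ℝ) by ring] at h

end Limits

def cyclicWindow (L : ℕ) (s : ZMod n) : Finset (ZMod n) :=
  univ.image fun l : Fin L => s + ((l : ℕ) : ZMod n)

lemma mem_cyclicWindow {s t : ZMod n} :
    t ∈ cyclicWindow L s ↔ ∃ l : Fin L, s + ((l : ℕ) : ZMod n) = t := by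
  simp [cyclicWindow]

lemma card_cyclicWindow (hLn : L ≤ n) (s : ZMod n) : #(cyclicWindow L s) = L := by
  rw [cyclicWindow, card_image_of_injective _ fun a b hab => ?_, card_univ, Fintype.card_fin]
  have := congrArg ZMod.val (add_left_cancel hab)
  rwa [ZMod.val_cast_of_lt (a.isLt.trans_le hLn), ZMod.val_cast_of_lt (b.isLt.trans_le hLn),
    ← Fin.ext_iff] at this

lemma mem_cyclicWindow_of_add_eq_add {s t : ZMod n} {a b : Fin L} (hba : (b : ℕ) ≤ a)
    (h : s + ((a : ℕ) : ZMod n) = t + ((b : ℕ) : ZMod n)) : t ∈ cyclicWindow L s :=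
  mem_cyclicWindow.2 ⟨⟨a - b, (Nat.sub_le _ _).trans_lt a.isLt⟩, by
    push_cast [Nat.cast_sub hba]; linear_combination h⟩

lemma disjoint_cyclicWindow {s t : ZMod n} (hst : t ∉ cyclicWindow L s)
    (hts : s ∉ cyclicWindow L t) : Disjoint (cyclicWindow L s) (cyclicWindow L t) := by
  refine disjoint_left.2 fun x hs ht => ?_
  obtain ⟨a, rfl⟩ := mem_cyclicWindow.1 hs
  obtain ⟨b, hb⟩ := mem_cyclicWindow.1 ht
  rcases le_total (b : ℕ) a with hba | hab
  · exact hst (mem_cyclicWindow_of_add_eq_add hba hb.symm)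
  · exact hts (mem_cyclicWindow_of_add_eq_add hab hb)

namespace SSE

variable (M : SSE n K L δ)

lemma iIndepFun_S : iIndepFun M.S M.μ :=
  M.indep.precomp (g := Sum.inl) Sum.inl_injective

lemma measureReal_S_preimage_singleton (i : Fin K) (s : ZMod n) :
    M.μ.real (M.S i ⁻¹' {s}) = (n : ℝ)⁻¹ := by
  simp [measureReal_def, Set.preimage, M.unifS]

lemma measureReal_S_preimage_finset (i : Fin K) (F : Finset (ZMod n)) :
    M.μ.real (M.S i ⁻¹' F) = #F / n := by
  rw [← sum_measureReal_preimage_singleton F fun s _ => M.measS i (measurableSet_singleton s)]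
  simp [M.measureReal_S_preimage_singleton, div_eq_mul_inv]

def startsIn (F : Fin K → Finset (ZMod n)) : Set M.Ω := ⋂ i, M.S i ⁻¹' F i

lemma mem_startsIn {F : Fin K → Finset (ZMod n)} {ω : M.Ω} :
    ω ∈ M.startsIn F ↔ ∀ i, M.S i ω ∈ F i := by
  simp [startsIn]

lemma measurableSet_startsIn (F : Fin K → Finset (ZMod n)) : MeasurableSet (M.startsIn F) :=
  .iInter fun i => M.measS i (F i).measurableSet

lemma measureReal_startsIn (F : Fin K → Finset (ZMod n)) :
    M.μ.real (M.startsIn F) = ∏ i, (#(F i) / n : ℝ) := by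
  have h := M.iIndepFun_S.measure_inter_preimage_eq_mul univ (sets := fun i => F i)
    (fun i _ => (F i).measurableSet)
  simp only [mem_univ, Set.iInter_true] at h
  simp only [startsIn, measureReal_def, h, ENNReal.toReal_prod]
  exact prod_congr rfl fun i _ => M.measureReal_S_preimage_finset i (F i)

def islandEvent (i : Fin K) : Set M.Ω :=
  {ω | ∀ j ≠ i, M.S j ω ∉ cyclicWindow L (M.S i ω)}

lemma trueIslandCount_eq_sum_indicator (ω : M.Ω) :
    (M.trueIslandCount ω : ℝ) = ∑ i, (M.islandEvent i).indicator 1 ω := by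
  simp only [trueIslandCount, islandEvent, mem_cyclicWindow, not_exists, card_filter,
    Nat.cast_sum, Nat.cast_ite, Nat.cast_one, Nat.cast_zero, Set.indicator_apply,
    Set.mem_ofPred_eq, Pi.one_apply]
  refine sum_congr rfl fun i _ => ?_
  simp only [ne_comm (a := M.S _ ω + _)]

variable [NeZero n]

lemma islandEvent_eq_iUnion (i : Fin K) :
    M.islandEvent i =
      ⋃ s, M.startsIn (Function.update (fun _ => (cyclicWindow L s)ᶜ) i {s}) := by
  ext ω
  simp only [islandEvent, Set.mem_ofPred_eq, Set.mem_iUnion, mem_startsIn]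
  constructor
  · intro h
    refine ⟨M.S i ω, fun j => ?_⟩
    rcases eq_or_ne j i with rfl | hj
    · simp
    · simpa [hj] using h j hj
  · rintro ⟨s, h⟩ j hj
    have hi := h i
    rw [Function.update_self, mem_singleton] at hi
    simpa [hj, hi] using h j

lemma measurableSet_islandEvent (i : Fin K) : MeasurableSet (M.islandEvent i) := by
  rw [M.islandEvent_eq_iUnion]
  exact .iUnion fun s => M.measurableSet_startsIn _

lemma measureReal_islandEvent (hLn : L ≤ n) (i : Fin K) :
    M.μ.real (M.islandEvent i) = (1 - L / n : ℝ) ^ (K - 1) := by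
  have hn : (n : ℝ) ≠ 0 := NeZero.ne _
  rw [M.islandEvent_eq_iUnion, measureReal_iUnion_fintype]
  · simp only [M.measureReal_startsIn,
      prod_comp_update_of_mem (mem_univ i) (fun B : Finset (ZMod n) => (#B / n : ℝ)),
      card_singleton, card_compl, card_cyclicWindow hLn, ZMod.card, card_univ_sdiff,
      Fintype.card_fin, Nat.cast_one, prod_const, sum_const, card_univ, nsmul_eq_mul]
    rw [Nat.cast_sub hLn, one_sub_div hn, div_pow]
    field_simp
  · intro s t hst
    refine Set.disjoint_left.2 fun ω hs ht => hst ?_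
    have hsi := M.mem_startsIn.1 hs i
    have hti := M.mem_startsIn.1 ht i
    rw [Function.update_self, mem_singleton] at hsi hti
    exact hsi.symm.trans hti
  · exact fun s => M.measurableSet_startsIn _

lemma islandEvent_inter_subset {i j : Fin K} (hij : i ≠ j) :
    M.islandEvent i ∩ M.islandEvent j ⊆
      ⋃ st ∈ univ.filter (fun st : ZMod n × ZMod n =>
          Disjoint (cyclicWindow L st.1) (cyclicWindow L st.2)),
        M.startsIn (Function.update (Function.update
          (fun _ => (cyclicWindow L st.1 ∪ cyclicWindow L st.2)ᶜ) i {st.1}) j {st.2}) := by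
  rintro ω ⟨hi, hj⟩
  simp only [Set.mem_iUnion, mem_startsIn, mem_filter, mem_univ, true_and]
  refine ⟨(M.S i ω, M.S j ω), disjoint_cyclicWindow (hi j hij.symm) (hj i hij), fun k => ?_⟩
  rcases eq_or_ne k j with rfl | hkj
  · simp
  rcases eq_or_ne k i with rfl | hki
  · simp [hkj]
  simp [hki, hkj, hi k hki, hj k hkj]

lemma measureReal_islandEvent_inter_le (h2L : 2 * L ≤ n) {i j : Fin K} (hij : i ≠ j) :
    M.μ.real (M.islandEvent i ∩ M.islandEvent j) ≤ (1 - 2 * L / n : ℝ) ^ (K - 2) := by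
  have hn : (n : ℝ) ≠ 0 := NeZero.ne _
  refine (measureReal_mono (M.islandEvent_inter_subset hij) (measure_ne_top _ _)).trans <|
    (measureReal_biUnion_finset_le _ _).trans ?_
  have hr : 0 ≤ (1 - 2 * L / n : ℝ) := by
    rw [sub_nonneg, div_le_one₀ (by positivity)]
    exact_mod_cast h2L
  have hterm : ∀ s t : ZMod n, Disjoint (cyclicWindow L s) (cyclicWindow L t) →
      M.μ.real (M.startsIn (Function.update (Function.update
        (fun _ => (cyclicWindow L s ∪ cyclicWindow L t)ᶜ) i {s}) j {t})) =
        (n : ℝ)⁻¹ ^ 2 * (1 - 2 * L / n : ℝ) ^ (K - 2) := by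
    intro s t hst
    have hK : #((univ \ {j}) \ {i}) = K - 2 := by
      rw [sdiff_sdiff_left, card_univ_sdiff, Fintype.card_fin, sup_eq_union, ← insert_eq,
        card_pair hij.symm]
    have hW : (#(cyclicWindow L s ∪ cyclicWindow L t)ᶜ : ℝ) = n - 2 * L := by
      rw [card_compl, card_union_of_disjoint hst, card_cyclicWindow (by omega),
        card_cyclicWindow (by omega), ZMod.card, Nat.cast_sub (by omega)]
      push_cast
      ring
    rw [M.measureReal_startsIn,
      prod_comp_update_of_mem (mem_univ j) (fun B : Finset (ZMod n) => (#B / n : ℝ)),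
      prod_comp_update_of_mem (by simpa using hij) (fun B : Finset (ZMod n) => (#B / n : ℝ))]
    simp only [card_singleton, Nat.cast_one, prod_const, hK, hW]
    rw [one_sub_div hn]
    field_simp
  calc ∑ st ∈ _, _
      = ∑ st ∈ univ.filter (fun st : ZMod n × ZMod n =>
          Disjoint (cyclicWindow L st.1) (cyclicWindow L st.2)),
          (n : ℝ)⁻¹ ^ 2 * (1 - 2 * L / n : ℝ) ^ (K - 2) :=
        sum_congr rfl fun st hst => hterm st.1 st.2 (mem_filter.1 hst).2
    _ ≤ ∑ _st : ZMod n × ZMod n, (n : ℝ)⁻¹ ^ 2 * (1 - 2 * L / n : ℝ) ^ (K - 2) :=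
        sum_le_sum_of_subset_of_nonneg (filter_subset _ _) fun _ _ _ => by positivity
    _ = (1 - 2 * L / n : ℝ) ^ (K - 2) := by
        simp only [sum_const, card_univ, Fintype.card_prod, ZMod.card, nsmul_eq_mul, Nat.cast_mul]
        field_simp

-- The bound is `E (X - K e)² / (ε K e)²`, with numerator and denominator divided by `K²`.
lemma measureReal_le_abs_trueIslandCount_sub_le (h2L : 2 * L ≤ n) (hK : 0 < K) {ε e : ℝ}
    (hε : 0 < ε) (he : 0 < e) :
    M.μ.real {ω | ε * (K * e) ≤ |(M.trueIslandCount ω : ℝ) - K * e|} ≤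
      ((1 - L / n : ℝ) ^ (K - 1) / K + (1 - 1 / K) * (1 - 2 * L / n : ℝ) ^ (K - 2)
        - 2 * e * (1 - L / n : ℝ) ^ (K - 1) + e ^ 2) / (ε * e) ^ 2 := by
  simp_rw [M.trueIslandCount_eq_sum_indicator]
  refine (measureReal_le_abs_sum_indicator_sub_le M.measurableSet_islandEvent
    (M.measureReal_islandEvent (by omega))
    (fun i j => M.measureReal_islandEvent_inter_le h2L) _ (by positivity)).trans (le_of_eq ?_)
  have hK' : (K : ℝ) ≠ 0 := by positivity
  rw [Fintype.card_fin]
  field_simp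

end SSE

section Regime

variable {c Lbar : ℝ}

lemma Lof_pos (hLbar : 0 < Lbar) (hn : 2 ≤ n) : 0 < Lof Lbar n :=
  Nat.ceil_pos.2 (mul_pos hLbar (logb_pos one_lt_two (by exact_mod_cast hn)))

lemma tendsto_Lof_div (hLbar : 0 ≤ Lbar) :
    Tendsto (fun n : ℕ => (Lof Lbar n : ℝ) / n) atTop (𝓝 0) := by
  have hlog : Tendsto (fun n : ℕ => log n / n) atTop (𝓝 0) :=
    isLittleO_log_id_atTop.tendsto_div_nhds_zero.comp tendsto_natCast_atTop_atTop
  have hupper : Tendsto (fun n : ℕ => Lbar / log 2 * (log n / n) + 1 / n) atTop (𝓝 0) := by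
    simpa using (hlog.const_mul (Lbar / log 2)).add tendsto_one_div_atTop_nhds_zero_nat
  refine tendsto_of_tendsto_of_tendsto_of_le_of_le' tendsto_const_nhds hupper
    (Eventually.of_forall fun n => by positivity) ?_
  filter_upwards [eventually_ge_atTop 1] with n hn
  have hceil : (Lof Lbar n : ℝ) ≤ Lbar * logb 2 n + 1 :=
    (Nat.ceil_lt_add_one (mul_nonneg hLbar (logb_nonneg one_lt_two (by exact_mod_cast hn)))).le
  calc (Lof Lbar n : ℝ) / n ≤ (Lbar * logb 2 n + 1) / n := by gcongr
    _ = Lbar / log 2 * (log n / n) + 1 / n := by rw [logb]; ring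

lemma tendsto_Kof_mul_Lof_div (hc : 0 ≤ c) (hLbar : 0 < Lbar) :
    Tendsto (fun n : ℕ => (Kof c Lbar n : ℝ) * (Lof Lbar n / n)) atTop (𝓝 c) := by
  have hupper : Tendsto (fun n : ℕ => c + (Lof Lbar n : ℝ) / n) atTop (𝓝 c) := by
    simpa using tendsto_const_nhds.add (tendsto_Lof_div hLbar.le)
  refine tendsto_of_tendsto_of_tendsto_of_le_of_le' tendsto_const_nhds hupper ?_ ?_ <;>
    filter_upwards [eventually_ge_atTop 2] with n hn <;>
    have hL : (0 : ℝ) < Lof Lbar n := by exact_mod_cast Lof_pos hLbar hn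
  · calc c = c * n / Lof Lbar n * (Lof Lbar n / n) := by field_simp
      _ ≤ (Kof c Lbar n : ℝ) * (Lof Lbar n / n) := by gcongr; exact Nat.le_ceil _
  · calc (Kof c Lbar n : ℝ) * (Lof Lbar n / n) ≤ (c * n / Lof Lbar n + 1) * (Lof Lbar n / n) := by
          gcongr; exact (Nat.ceil_lt_add_one (by positivity)).le
      _ = c + Lof Lbar n / n := by field_simp

lemma tendsto_Kof_atTop (hc : 0 < c) (hLbar : 0 < Lbar) : Tendsto (Kof c Lbar) atTop atTop := by
  have hpos : ∀ᶠ n : ℕ in atTop, 0 < (Lof Lbar n : ℝ) / n :=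
    (eventually_ge_atTop 2).mono fun n hn => div_pos (by exact_mod_cast Lof_pos hLbar hn)
      (by positivity)
  have h := (tendsto_Kof_mul_Lof_div hc.le hLbar).pos_mul_atTop hc
    (tendsto_nhdsWithin_of_tendsto_nhds_of_eventually_within _ (tendsto_Lof_div hLbar.le)
      hpos).inv_tendsto_nhdsGT_zero
  refine tendsto_natCast_atTop_iff.1 (h.congr' ?_)
  filter_upwards [hpos] with n hn
  rw [Pi.inv_apply, mul_inv_cancel_right₀ hn.ne']

lemma eventually_two_mul_Lof_le (hLbar : 0 ≤ Lbar) : ∀ᶠ n : ℕ in atTop, 2 * Lof Lbar n ≤ n := by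
  filter_upwards [(tendsto_Lof_div hLbar).eventually_le_const (by norm_num : (0 : ℝ) < 1 / 2),
    eventually_gt_atTop 0] with n hn hn0
  rw [div_le_iff₀ (by positivity)] at hn
  exact_mod_cast (by linarith : (2 * Lof Lbar n : ℝ) ≤ n)

lemma tendsto_one_sub_Lof_div_pow (hc : 0 < c) (hLbar : 0 < Lbar) :
    Tendsto (fun n : ℕ => (1 - Lof Lbar n / n : ℝ) ^ (Kof c Lbar n - 1)) atTop
      (𝓝 (exp (-c))) :=
  tendsto_one_sub_pow_of_tendsto_mul (tendsto_Lof_div hLbar.le)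
    (tendsto_natSub_mul_of_tendsto_mul ((tendsto_Kof_atTop hc hLbar).eventually_ge_atTop 1)
      (tendsto_Lof_div hLbar.le) (tendsto_Kof_mul_Lof_div hc.le hLbar))

lemma tendsto_one_sub_two_mul_Lof_div_pow (hc : 0 < c) (hLbar : 0 < Lbar) :
    Tendsto (fun n : ℕ => (1 - 2 * Lof Lbar n / n : ℝ) ^ (Kof c Lbar n - 2)) atTop
      (𝓝 (exp (-c) ^ 2)) := by
  have h2x := (tendsto_Lof_div hLbar.le).const_mul 2
  rw [mul_zero] at h2x
  have h := tendsto_one_sub_pow_of_tendsto_mul h2x (tendsto_natSub_mul_of_tendsto_mul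
    ((tendsto_Kof_atTop hc hLbar).eventually_ge_atTop 2) h2x
    (by simpa [mul_left_comm] using (tendsto_Kof_mul_Lof_div hc.le hLbar).const_mul 2))
  simpa [mul_div_assoc, ← exp_nat_mul] using h

end Regime

theorem trueIslands_concentration_general
    (c Lbar δ : ℝ) (hc : 0 < c) (hLbar : 0 < Lbar)
    (model : ∀ n : ℕ, 2 ≤ n → SSE n (Kof c Lbar n) (Lof Lbar n) δ)
    (ε : ℝ) (hε : 0 < ε) :
    Tendsto (fun n : ℕ =>
        if h : 2 ≤ n then
          ((model n h).μ {ω |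
            ε * ((Kof c Lbar n : ℝ) * Real.exp (-c)) ≤
              |((model n h).trueIslandCount ω : ℝ) -
                (Kof c Lbar n : ℝ) * Real.exp (-c)|}).toReal
        else 0) atTop (nhds 0) := by
  have hK := tendsto_Kof_atTop hc hLbar
  refine squeeze_zero' (Eventually.of_forall fun n => ?_) ?_
    (tendsto_second_moment_bound_div_sq (ε := ε) (tendsto_one_sub_Lof_div_pow hc hLbar)
      (tendsto_one_sub_two_mul_Lof_div_pow hc hLbar)
      ((tendsto_natCast_atTop_atTop (R := ℝ)).comp hK))
  · split_ifs
    exacts [ENNReal.toReal_nonneg, le_rfl]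
  filter_upwards [eventually_ge_atTop 2, eventually_two_mul_Lof_le hLbar.le,
    hK.eventually_ge_atTop 1] with n hn h2L hK1
  have : NeZero n := ⟨by omega⟩
  rw [dif_pos hn]
  exact (model n hn).measureReal_le_abs_trueIslandCount_sub_le h2L hK1 hε (exp_pos _)

/-- Concentration of the number of true islands (Lemma 1). -/
theorem trueIslands_concentration
    (c Lbar δ : ℝ) (hc : 0 < c) (hLbar : 0 < Lbar) (hδ0 : 0 ≤ δ) (hδ1 : δ < 1)
    (model : ∀ n : ℕ, 2 ≤ n → SSE n (Kof c Lbar n) (Lof Lbar n) δ)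
    (ε : ℝ) (hε : 0 < ε) :
    Tendsto (fun n : ℕ =>
        if h : 2 ≤ n then
          ((model n h).μ {ω |
            ε * ((Kof c Lbar n : ℝ) * Real.exp (-c)) ≤
              |((model n h).trueIslandCount ω : ℝ) -
                (Kof c Lbar n : ℝ) * Real.exp (-c)|}).toReal
        else 0) atTop (nhds 0) :=
  trueIslands_concentration_general c Lbar δ hc hLbar model ε hε
end
end

section
/- Variance bound for the number of visibly covered positions: In the SSE model with fixed parameters n, K, L, δ, let 𝒫 denote the number of positions m ∈ Z/nZ that are visibly covered. Then Var(𝒫) ≤ E[𝒫] + n·L. -/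
open Filter

noncomputable section

variable {n K L : ℕ} {δ : ℝ}

/-!
Write `𝒫 = ∑ₘ 1_{Aₘ}` with `Aₘ` the event that `m` is visibly covered, so that
`Var 𝒫 = ∑_{m,m'} Cov(1_{Aₘ}, 1_{Aₘ'})`. A covariance of two indicators is at most `1/4`.
If `m'` is not within cyclic distance `< L` of `m`, no read can visibly cover both positions; then
`Aₘᶜ = ⋂ᵢ Uᵢ` and `Aₘ'ᶜ = ⋂ᵢ Vᵢ` with `Uᵢ, Vᵢ` determined by read `i`, the reads are independent,
and `Uᵢ ∪ Vᵢ = Ω` gives `P(Uᵢ ∩ Vᵢ) = P(Uᵢ) + P(Vᵢ) - 1 ≤ P(Uᵢ) P(Vᵢ)`, so the covariance is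
`≤ 0`. Hence each row contributes at most `2L · 1/4`, and `Var 𝒫 ≤ n L / 2`.
-/

open MeasureTheory ProbabilityTheory

namespace ProbabilityTheory

variable {Ω : Type*} {mΩ : MeasurableSpace Ω} {μ : Measure Ω}

theorem iIndep.iIndep_biSup_fibers {ι κ : Type*} {m : ι → MeasurableSpace Ω}
    (h_le : ∀ i, m i ≤ mΩ) (h : iIndep m μ) (p : ι → κ) :
    iIndep (fun k ↦ ⨆ i ∈ p ⁻¹' {k}, m i) μ := by
  classical
  refine iIndepSets.iIndep (fun k ↦ iSup₂_le fun i _ ↦ h_le i)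
    (fun k ↦ piiUnionInter (fun i ↦ {s | MeasurableSet[m i] s}) (p ⁻¹' {k}))
    (fun k ↦ isPiSystem_piiUnionInter _
      (fun i ↦ @MeasurableSpace.isPiSystem_measurableSet Ω (m i)) _)
    (fun k ↦ (generateFrom_piiUnionInter_measurableSet m _).symm) ?_
  rw [iIndepSets_iff]
  intro s f hf
  choose! t ht g hg hfg using hf
  have hfiber : ∀ k ∈ s, ∀ i ∈ t k, p i = k := fun k hk i hi ↦ ht k hk hi
  have hf_eq : ∀ k ∈ s, f k = ⋂ i ∈ t k, g (p i) i := by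
    intro k hk
    rw [hfg k hk]
    exact Set.iInter₂_congr fun i hi ↦ by rw [hfiber k hk i hi]
  have hmeas : ∀ k ∈ s, ∀ i ∈ t k, MeasurableSet[m i] (g (p i) i) := by
    intro k hk i hi
    rw [hfiber k hk i hi]
    exact hg k hk i hi
  have hdisj : (s : Set κ).PairwiseDisjoint t := by
    intro k hk k' hk' hkk'
    refine Finset.disjoint_left.mpr fun i hi hi' ↦ hkk' ?_
    rw [← hfiber k hk i hi, hfiber k' hk' i hi']
  calc μ (⋂ k ∈ s, f k) = μ (⋂ i ∈ s.biUnion t, g (p i) i) := by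
        rw [Finset.set_biInter_biUnion]
        exact congrArg μ (Set.iInter₂_congr fun k hk ↦ hf_eq k hk)
    _ = ∏ i ∈ s.biUnion t, μ (g (p i) i) := by
        refine h.meas_biInter fun i hi ↦ ?_
        obtain ⟨k, hk, hik⟩ := Finset.mem_biUnion.mp hi
        exact hmeas k hk i hik
    _ = ∏ k ∈ s, μ (f k) := by
        rw [Finset.prod_biUnion hdisj]
        refine Finset.prod_congr rfl fun k hk ↦ ?_
        rw [hf_eq k hk, h.meas_biInter fun i hi ↦ hmeas k hk i hi]

lemma iIndep.measureReal_iInter {ι : Type*} [Fintype ι] {m : ι → MeasurableSpace Ω}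
    (h : iIndep m μ) {U : ι → Set Ω} (hU : ∀ i, MeasurableSet[m i] (U i)) :
    μ.real (⋂ i, U i) = ∏ i, μ.real (U i) := by
  simp only [measureReal_def, h.meas_iInter hU, ENNReal.toReal_prod]

variable [IsProbabilityMeasure μ] {A B : Set Ω}

lemma covariance_indicator_one (hA : MeasurableSet A) (hB : MeasurableSet B) :
    cov[A.indicator 1, B.indicator 1; μ] = μ.real (A ∩ B) - μ.real A * μ.real B := by
  have hA2 : MemLp (A.indicator (1 : Ω → ℝ)) 2 μ := (memLp_const 1).indicator hA
  have hB2 : MemLp (B.indicator (1 : Ω → ℝ)) 2 μ := (memLp_const 1).indicator hB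
  rw [covariance_eq_sub hA2 hB2, ← Set.inter_indicator_one, integral_indicator_one hA,
    integral_indicator_one hB, integral_indicator_one (hA.inter hB)]

lemma covariance_indicator_one_le (hA : MeasurableSet A) (hB : MeasurableSet B) :
    cov[A.indicator 1, B.indicator 1; μ] ≤ 1 / 4 := by
  rw [covariance_indicator_one hA hB]
  have hAB : μ.real (A ∩ B) ≤ min (μ.real A) (μ.real B) :=
    le_min (measureReal_mono Set.inter_subset_left) (measureReal_mono Set.inter_subset_right)
  have hA1 : μ.real A ≤ 1 := measureReal_le_one
  have hB1 : μ.real B ≤ 1 := measureReal_le_one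
  have hA0 : 0 ≤ μ.real A := measureReal_nonneg
  have hB0 : 0 ≤ μ.real B := measureReal_nonneg
  rcases le_total (μ.real A) (μ.real B) with h | h
  · nlinarith [min_eq_left h, sq_nonneg (μ.real A - 1 / 2)]
  · nlinarith [min_eq_right h, sq_nonneg (μ.real B - 1 / 2)]

lemma covariance_indicator_one_compl (hA : MeasurableSet A) (hB : MeasurableSet B) :
    cov[Aᶜ.indicator 1, Bᶜ.indicator 1; μ] = cov[A.indicator 1, B.indicator 1; μ] := by
  rw [covariance_indicator_one hA.compl hB.compl, covariance_indicator_one hA hB,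
    ← Set.compl_union, measureReal_compl (hA.union hB), measureReal_compl hA,
    measureReal_compl hB, probReal_univ]
  linear_combination -measureReal_union_add_inter (μ := μ) (s := A) hB

lemma measureReal_inter_le_mul_of_union_eq_univ (hB : MeasurableSet B)
    (hAB : A ∪ B = Set.univ) : μ.real (A ∩ B) ≤ μ.real A * μ.real B := by
  have h := measureReal_union_add_inter (μ := μ) (s := A) hB
  rw [hAB, probReal_univ] at h
  nlinarith [measureReal_le_one (μ := μ) (s := A), measureReal_le_one (μ := μ) (s := B)]

lemma iIndep.covariance_indicator_iInter_nonpos {ι : Type*} [Fintype ι]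
    {m : ι → MeasurableSpace Ω} (h_le : ∀ i, m i ≤ mΩ) (h : iIndep m μ) {U V : ι → Set Ω}
    (hU : ∀ i, MeasurableSet[m i] (U i)) (hV : ∀ i, MeasurableSet[m i] (V i))
    (hUV : ∀ i, U i ∪ V i = Set.univ) :
    cov[(⋂ i, U i).indicator 1, (⋂ i, V i).indicator 1; μ] ≤ 0 := by
  have hU' i : MeasurableSet (U i) := h_le i _ (hU i)
  have hV' i : MeasurableSet (V i) := h_le i _ (hV i)
  rw [covariance_indicator_one (.iInter hU') (.iInter hV'), ← Set.iInter_inter_distrib,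
    h.measureReal_iInter hU, h.measureReal_iInter hV,
    h.measureReal_iInter fun i ↦ (hU i).inter (hV i), ← Finset.prod_mul_distrib, sub_nonpos]
  exact Finset.prod_le_prod (fun i _ ↦ measureReal_nonneg)
    fun i _ ↦ measureReal_inter_le_mul_of_union_eq_univ (hV' i) (hUV i)

end ProbabilityTheory

def nearbyPositions (L : ℕ) (m : ZMod n) : Finset (ZMod n) :=
  (Finset.Ioo (-(L : ℤ)) L).image fun z : ℤ ↦ m + (z : ZMod n)

lemma card_nearbyPositions_le (L : ℕ) (m : ZMod n) : (nearbyPositions L m).card ≤ 2 * L := by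
  refine Finset.card_image_le.trans ?_
  rw [Int.card_Ioo]
  omega

namespace SSE

variable (M : SSE n K L δ)

def coveredSet (m : ZMod n) : Set M.Ω := {ω | M.VisiblyCovered ω m}

def readMisses (i : Fin K) (m : ZMod n) : Set M.Ω :=
  {ω | ∀ j : Fin L, M.S i ω + ((j : ℕ) : ZMod n) = m → M.E i j ω = true}

lemma compl_coveredSet (m : ZMod n) : (M.coveredSet m)ᶜ = ⋂ i, M.readMisses i m := by
  ext ω
  simp [coveredSet, readMisses, VisiblyCovered]

lemma readMisses_union_eq_univ (i : Fin K) {m m' : ZMod n} (hm' : m' ∉ nearbyPositions L m) :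
    M.readMisses i m ∪ M.readMisses i m' = Set.univ := by
  refine Set.eq_univ_of_forall fun ω ↦ Classical.byContradiction fun hω ↦ hm' ?_
  simp only [readMisses, Set.mem_union, Set.mem_ofPred_eq, not_or, not_forall,
    Bool.not_eq_true, exists_prop] at hω
  obtain ⟨⟨j, hj, -⟩, ⟨j', hj', -⟩⟩ := hω
  have := j.isLt
  have := j'.isLt
  refine Finset.mem_image.mpr ⟨(j' : ℤ) - j, Finset.mem_Ioo.mpr ⟨by omega, by omega⟩, ?_⟩
  rw [← hj, ← hj']
  push_cast
  ring

def readIndex : Fin K ⊕ (Fin K × Fin L) → Fin K := Sum.elim id Prod.fst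

abbrev readMeasurableSpace (i : Fin K) : MeasurableSpace M.Ω :=
  ⨆ t ∈ readIndex ⁻¹' {i}, (sseTypeMS n K L t).comap (sseVars M.S M.E t)

lemma comap_sseVars_le (t : Fin K ⊕ (Fin K × Fin L)) :
    (sseTypeMS n K L t).comap (sseVars M.S M.E t) ≤ M.mΩ := by
  rcases t with k | ⟨k, j⟩
  exacts [(M.measS k).comap_le, (M.measE k j).comap_le]

lemma readMeasurableSpace_le (i : Fin K) : M.readMeasurableSpace i ≤ M.mΩ :=
  iSup₂_le fun t _ ↦ M.comap_sseVars_le t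

lemma iIndep_readMeasurableSpace : iIndep M.readMeasurableSpace M.μ :=
  ((iIndepFun_iff_iIndep _ _ _).1 M.indep).iIndep_biSup_fibers M.comap_sseVars_le readIndex

lemma comap_sseVars_le_readMeasurableSpace {i : Fin K} (t : Fin K ⊕ (Fin K × Fin L))
    (ht : readIndex t = i) :
    (sseTypeMS n K L t).comap (sseVars M.S M.E t) ≤ M.readMeasurableSpace i :=
  le_iSup₂ (f := fun t (_ : t ∈ readIndex ⁻¹' {i}) ↦
    (sseTypeMS n K L t).comap (sseVars M.S M.E t)) t ht

lemma measurableSet_readMisses (i : Fin K) (m : ZMod n) :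
    MeasurableSet[M.readMeasurableSpace i] (M.readMisses i m) := by
  have hmisses : M.readMisses i m =
      ⋂ j : Fin L, (M.S i ⁻¹' {s | s + ((j : ℕ) : ZMod n) ≠ m} ∪ M.E i j ⁻¹' {true}) := by
    ext ω
    simp [readMisses, imp_iff_not_or]
  rw [hmisses]
  exact .iInter fun j ↦
    (M.comap_sseVars_le_readMeasurableSpace (.inl i) rfl _ ⟨_, trivial, rfl⟩).union
      (M.comap_sseVars_le_readMeasurableSpace (.inr (i, j)) rfl _ ⟨_, trivial, rfl⟩)

lemma measurableSet_coveredSet (m : ZMod n) : MeasurableSet (M.coveredSet m) := by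
  rw [← MeasurableSet.compl_iff, compl_coveredSet]
  exact .iInter fun i ↦ M.readMeasurableSpace_le i _ (M.measurableSet_readMisses i m)

lemma covariance_coveredSet_le (m m' : ZMod n) :
    cov[(M.coveredSet m).indicator 1, (M.coveredSet m').indicator 1; M.μ]
      ≤ if m' ∈ nearbyPositions L m then 1 / 4 else 0 := by
  split_ifs with hm'
  · exact covariance_indicator_one_le (M.measurableSet_coveredSet m)
      (M.measurableSet_coveredSet m')
  · rw [← covariance_indicator_one_compl (M.measurableSet_coveredSet m)
      (M.measurableSet_coveredSet m'), compl_coveredSet, compl_coveredSet]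
    exact M.iIndep_readMeasurableSpace.covariance_indicator_iInter_nonpos
      M.readMeasurableSpace_le (M.measurableSet_readMisses · m)
      (M.measurableSet_readMisses · m') (M.readMisses_union_eq_univ · hm')

variable [NeZero n]

lemma coveredCount_eq_sum_indicator (ω : M.Ω) :
    (M.coveredCount ω : ℝ) = ∑ m, (M.coveredSet m).indicator 1 ω := by
  classical
  rw [coveredCount, Set.ncard_eq_toFinset_card', Set.toFinset_ofPred, Finset.card_filter]
  push_cast
  simp only [coveredSet, Set.indicator_apply, Set.mem_ofPred_eq, Pi.one_apply]

lemma variance_coveredCount :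
    Var[fun ω ↦ (M.coveredCount ω : ℝ); M.μ]
      = ∑ m, ∑ m', cov[(M.coveredSet m).indicator 1, (M.coveredSet m').indicator 1; M.μ] := by
  have hmem m : MemLp ((M.coveredSet m).indicator (1 : M.Ω → ℝ)) 2 M.μ :=
    (memLp_const 1).indicator (M.measurableSet_coveredSet m)
  simp_rw [coveredCount_eq_sum_indicator]
  rw [← covariance_self (Finset.aemeasurable_fun_sum _ fun m _ ↦ (hmem m).aemeasurable),
    covariance_fun_sum_fun_sum hmem hmem]

end SSE

theorem variance_coveredCount_bound_general
    (n K L : ℕ) (δ : ℝ) (hn : 1 ≤ n) (M : SSE n K L δ) :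
    ProbabilityTheory.variance (fun ω => (M.coveredCount ω : ℝ)) M.μ
      ≤ (∫ ω, (M.coveredCount ω : ℝ) ∂M.μ) + (n : ℝ) * (L : ℝ) := by
  have : NeZero n := ⟨by omega⟩
  calc Var[fun ω ↦ (M.coveredCount ω : ℝ); M.μ]
      ≤ ∑ m : ZMod n, ∑ m', if m' ∈ nearbyPositions L m then (1 / 4 : ℝ) else 0 := by
        rw [M.variance_coveredCount]
        gcongr with m _ m' _
        exact M.covariance_coveredSet_le m m'
    _ = ∑ m : ZMod n, ((nearbyPositions L m).card / 4 : ℝ) := by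
        simp [Finset.sum_ite_mem, div_eq_mul_inv]
    _ ≤ ∑ _m : ZMod n, (L : ℝ) := by
        gcongr with m
        have hcard : ((nearbyPositions L m).card : ℝ) ≤ 2 * L :=
          mod_cast card_nearbyPositions_le L m
        linarith [(L.cast_nonneg : (0 : ℝ) ≤ L)]
    _ ≤ (∫ ω, (M.coveredCount ω : ℝ) ∂M.μ) + n * L := by
        simp only [Finset.sum_const, Finset.card_univ, ZMod.card, nsmul_eq_mul]
        have hmean : 0 ≤ ∫ ω, (M.coveredCount ω : ℝ) ∂M.μ := integral_nonneg fun ω ↦ by positivity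
        linarith

/-- Variance bound for the number of visibly covered positions. -/
theorem variance_coveredCount_bound
    (n K L : ℕ) (δ : ℝ) (hn : 1 ≤ n) (hK : 1 ≤ K) (hL : 1 ≤ L) (hLn : L ≤ n)
    (hδ0 : 0 ≤ δ) (hδ1 : δ < 1) (M : SSE n K L δ) :
    ProbabilityTheory.variance (fun ω => (M.coveredCount ω : ℝ)) M.μ
      ≤ (∫ ω, (M.coveredCount ω : ℝ) ∂M.μ) + (n : ℝ) * (L : ℝ) :=
  variance_coveredCount_bound_general n K L δ hn M
end
end

section
/- Bound on M_z for large effective size (Lemma 3, part b): Fix constants c > 0, L̄ > 0 and δ ∈ [0,1), and work in the asymptotic regime of the SSE model with a uniformly random input string. Then for every ε > 0, Pr( ∃ l ∈ {1,…,L(n)} and z ∈ {0,1,⊥}^l with τ_ue(z) > 1 − ε such that M_z ≥ n^{ε} ) → 0 as n → ∞. -/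
open Filter

noncomputable section

variable {n K L : ℕ} {δ : ℝ}

/-!
Fix a pattern `z` with `σ` unerased symbols. Distinct reads `i₁, …, i_q` all match `z` only if
the input agrees with `z` on the union of the `q` translates of the support of `z` by the
starts, an event of probability `2 ^ (-size of the union)`. Adding the windows one at a time, a
uniformly placed window meets the previous union in few points on average, which bounds the
`q`-th factorial moment of `M_z` by `(K (2⁻¹ ^ σ + σ² q / n)) ^ q`. With `q = L`, threshold
`n ^ ε` and `σ > (1 - ε) log₂ n`, Markov's inequality gives `P(M_z ≥ n ^ ε) ≤ (4K/n) ^ L`; a union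
bound over the fewer than `3 ^ (L + 1)` patterns leaves `3 (12 K / n) ^ L`, and `K / n ≈ c / L → 0`.
-/

open Finset
open scoped Pointwise

lemma inv_two_pow_sub_le (σ O : ℕ) : (2⁻¹ : ℝ) ^ (σ - O) ≤ 2⁻¹ ^ σ + O := by
  rcases Nat.eq_zero_or_pos O with rfl | hO
  · simp
  · have : (2⁻¹ : ℝ) ^ (σ - O) ≤ 1 := pow_le_one₀ (by norm_num) (by norm_num)
    have : (1 : ℝ) ≤ O := by exact_mod_cast hO
    linarith [pow_nonneg (by norm_num : (0 : ℝ) ≤ 2⁻¹) σ]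

section WindowCover

variable {G : Type*} [AddCommGroup G] [DecidableEq G]

lemma sum_card_vadd_finset_inter [Fintype G] (J U : Finset G) :
    ∑ a : G, #((a +ᵥ J) ∩ U) = #J * #U := by
  have hshift (j : G) : ∑ a : G, (if a + j ∈ U then 1 else 0) = #U :=
    (Equiv.sum_comp (Equiv.addRight j) fun b => if b ∈ U then 1 else 0).trans (by simp)
  calc ∑ a : G, #((a +ᵥ J) ∩ U)
      = ∑ a : G, ∑ j ∈ J, if a + j ∈ U then 1 else 0 := by
        refine sum_congr rfl fun a _ => ?_
        rw [← filter_mem_eq_inter, card_filter, ← image_vadd, sum_image (by simp)]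
        rfl
    _ = #J * #U := by
        rw [sum_comm, sum_congr rfl fun j _ => hshift j, sum_const, smul_eq_mul]

lemma sum_inv_two_pow_card_vadd_finset_sdiff_le [Fintype G] (J U : Finset G) :
    ∑ a : G, (2⁻¹ : ℝ) ^ #((a +ᵥ J) \ U) ≤ Fintype.card G * 2⁻¹ ^ #J + #J * #U := by
  calc ∑ a : G, (2⁻¹ : ℝ) ^ #((a +ᵥ J) \ U)
      ≤ ∑ a : G, ((2⁻¹ : ℝ) ^ #J + #((a +ᵥ J) ∩ U)) := by
        gcongr with a
        rw [card_sdiff, inter_comm, card_vadd_finset]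
        exact inv_two_pow_sub_le _ _
    _ = Fintype.card G * 2⁻¹ ^ #J + #J * #U := by
        rw [sum_add_distrib, sum_const, card_univ, nsmul_eq_mul, ← Nat.cast_sum,
          sum_card_vadd_finset_inter, Nat.cast_mul]

def windowCover (J : Finset G) {q : ℕ} (p : Fin q → G) : Finset G :=
  univ.biUnion fun k => p k +ᵥ J

lemma windowCover_cons (J : Finset G) {q : ℕ} (a : G) (p : Fin q → G) :
    windowCover J (Fin.cons a p) = (a +ᵥ J) ∪ windowCover J p := by
  ext x
  simp [windowCover, Fin.exists_fin_succ]

lemma card_windowCover_le (J : Finset G) {q : ℕ} (p : Fin q → G) :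
    #(windowCover J p) ≤ q * #J :=
  card_biUnion_le.trans (by simp)

theorem sum_inv_two_pow_card_windowCover_le [Fintype G] (J : Finset G) (q : ℕ) :
    ∑ p : Fin q → G, (2⁻¹ : ℝ) ^ #(windowCover J p)
      ≤ (Fintype.card G * 2⁻¹ ^ #J + #J ^ 2 * q) ^ q := by
  induction q with
  | zero => simp [windowCover]
  | succ q ih =>
    set A : ℕ → ℝ := fun m => Fintype.card G * 2⁻¹ ^ #J + #J ^ 2 * m
    have hA_mono : A q ≤ A (q + 1) := by simp only [A]; gcongr; simp
    have hstep (p : Fin q → G) :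
        ∑ a : G, (2⁻¹ : ℝ) ^ #((a +ᵥ J) \ windowCover J p) ≤ A (q + 1) := by
      refine (sum_inv_two_pow_card_vadd_finset_sdiff_le J _).trans ?_
      have : (#(windowCover J p) : ℝ) ≤ q * #J := by exact_mod_cast card_windowCover_le J p
      simp only [A]; push_cast; nlinarith [sq_nonneg (#J : ℝ)]
    calc ∑ p : Fin (q + 1) → G, (2⁻¹ : ℝ) ^ #(windowCover J p)
        = ∑ p : Fin q → G, (2⁻¹ : ℝ) ^ #(windowCover J p) *
            ∑ a : G, 2⁻¹ ^ #((a +ᵥ J) \ windowCover J p) := by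
          rw [← (Fin.consEquiv fun _ => G).sum_comp, Fintype.sum_prod_type, sum_comm]
          refine sum_congr rfl fun p _ => ?_
          rw [mul_sum]
          refine sum_congr rfl fun a _ => ?_
          change (2⁻¹ : ℝ) ^ #(windowCover J (Fin.cons a p)) = _
          rw [windowCover_cons, ← card_sdiff_add_card, pow_add, mul_comm]
      _ ≤ ∑ p : Fin q → G, (2⁻¹ : ℝ) ^ #(windowCover J p) * A (q + 1) := by
          gcongr with p; exact hstep p
      _ ≤ A q ^ q * A (q + 1) := by rw [← sum_mul]; gcongr
      _ ≤ A (q + 1) ^ (q + 1) := by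
          rw [pow_succ]; gcongr

end WindowCover

lemma card_mul_pow_card_le_of_eqOn {α β : Type*} [Fintype α] [DecidableEq α] [Fintype β]
    (A : Finset (α → β)) (U : Finset α) (hA : ∀ f ∈ A, ∀ g ∈ A, ∀ u ∈ U, f u = g u) :
    #A * Fintype.card β ^ #U ≤ Fintype.card β ^ Fintype.card α := by
  have hrestrict : #A ≤ #(univ : Finset ({a // a ∉ U} → β)) := by
    refine card_le_card_of_injOn (fun f a => f a) (by simp) fun f hf g hg hfg => ?_
    funext a
    by_cases ha : a ∈ U
    · exact hA f hf g hg a ha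
    · exact congrFun hfg ⟨a, ha⟩
  rw [card_univ, Fintype.card_fun, Fintype.card_subtype_compl, Fintype.card_coe] at hrestrict
  calc #A * Fintype.card β ^ #U
      ≤ Fintype.card β ^ (Fintype.card α - #U) * Fintype.card β ^ #U := by gcongr
    _ = Fintype.card β ^ Fintype.card α := pow_sub_mul_pow _ (card_le_univ U)

lemma descFactorial_card_le_card_filter_embedding {ι : Type*} [Fintype ι] [DecidableEq ι]
    (s : Finset ι) (q : ℕ) : (#s).descFactorial q ≤ #{t : Fin q ↪ ι | ∀ k, t k ∈ s} := by
  calc (#s).descFactorial q = #(univ : Finset (Fin q ↪ s)) := by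
        rw [card_univ, Fintype.card_embedding_eq, Fintype.card_fin, Fintype.card_coe]
    _ ≤ #{t : Fin q ↪ ι | ∀ k, t k ∈ s} := by
        refine card_le_card_of_injOn (fun e => e.trans (Function.Embedding.subtype _))
          (by simp) fun e₁ _ e₂ _ h => ?_
        ext k
        exact DFunLike.congr_fun h k

/-- Markov's inequality for the `q`-th factorial moment of the number of indices `i`
with `P y i`, in counting form. -/
theorem pow_mul_card_filter_le_sum_embedding {F ι : Type*} [Fintype F] [Fintype ι] [DecidableEq ι]
    (P : F → ι → Prop) [∀ y i, Decidable (P y i)] (T q : ℕ) :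
    (T + 1 - q) ^ q * #{y | T ≤ #{i | P y i}} ≤ ∑ t : Fin q ↪ ι, #{y | ∀ k, P y (t k)} := by
  have hmoment (y : F) (hy : T ≤ #{i | P y i}) :
      (T + 1 - q) ^ q ≤ #{t : Fin q ↪ ι | ∀ k, P y (t k)} :=
    calc (T + 1 - q) ^ q ≤ (#{i | P y i} + 1 - q) ^ q := by gcongr
      _ ≤ (#{i | P y i}).descFactorial q := Nat.pow_sub_le_descFactorial _ _
      _ ≤ #{t : Fin q ↪ ι | ∀ k, P y (t k)} := by
          simpa using descFactorial_card_le_card_filter_embedding {i | P y i} q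
  calc (T + 1 - q) ^ q * #{y | T ≤ #{i | P y i}}
      = ∑ y with T ≤ #{i | P y i}, (T + 1 - q) ^ q := by rw [sum_const, smul_eq_mul, mul_comm]
    _ ≤ ∑ y with T ≤ #{i | P y i}, #{t : Fin q ↪ ι | ∀ k, P y (t k)} :=
        sum_le_sum fun y hy => hmoment y (mem_filter.1 hy).2
    _ ≤ ∑ y, #{t : Fin q ↪ ι | ∀ k, P y (t k)} := sum_le_sum_of_subset (filter_subset _ _)
    _ = ∑ t : Fin q ↪ ι, #{y | ∀ k, P y (t k)} := by simp_rw [card_filter]; exact sum_comm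

section Matching

open scoped Classical

variable {l : ℕ}

def zSupport (n : ℕ) (z : Fin l → Option Bool) : Finset (ZMod n) :=
  (univ.filter fun j : Fin l => z j ≠ none).image fun j : Fin l => ((j : ℕ) : ZMod n)

lemma card_zSupport (hln : l ≤ n) (z : Fin l → Option Bool) : #(zSupport n z) = sizeZ z := by
  refine card_image_of_injOn fun j₁ _ j₂ _ h => Fin.ext ?_
  simpa [ZMod.val_natCast, Nat.mod_eq_of_lt (j₁.2.trans_le hln),
    Nat.mod_eq_of_lt (j₂.2.trans_le hln)] using congrArg ZMod.val h

lemma ZMatches.eq_of_mem_windowCover {z : Fin l → Option Bool} {q : ℕ} {p : Fin q → ZMod n}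
    {x x' : ZMod n → Bool} (hx : ∀ k, ZMatches x z (p k)) (hx' : ∀ k, ZMatches x' z (p k))
    {u : ZMod n} (hu : u ∈ windowCover (zSupport n z) p) : x u = x' u := by
  simp only [windowCover, zSupport, mem_biUnion, mem_univ, true_and, mem_vadd_finset,
    mem_image, mem_filter] at hu
  obtain ⟨k, _, ⟨j, hj, rfl⟩, rfl⟩ := hu
  obtain ⟨b, hb⟩ := Option.ne_none_iff_exists'.1 hj
  exact (hx k j b hb).trans (hx' k j b hb).symm

variable [NeZero n]

lemma card_filter_forall_zMatches_le (z : Fin l → Option Bool) {q : ℕ} (p : Fin q → ZMod n) :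
    (#{x : ZMod n → Bool | ∀ k, ZMatches x z (p k)} : ℝ)
      ≤ 2 ^ n * 2⁻¹ ^ #(windowCover (zSupport n z) p) := by
  have h := card_mul_pow_card_le_of_eqOn {x : ZMod n → Bool | ∀ k, ZMatches x z (p k)}
    (windowCover (zSupport n z) p) fun x hx x' hx' u hu =>
      ZMatches.eq_of_mem_windowCover (mem_filter.1 hx).2 (mem_filter.1 hx').2 hu
  rw [Fintype.card_bool, ZMod.card] at h
  rw [inv_pow, ← div_eq_mul_inv, le_div_iff₀ (by positivity)]
  exact_mod_cast h

lemma card_filter_comp_eq_le {q : ℕ} (t : Fin q ↪ Fin K) (p : Fin q → ZMod n) :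
    (#{s : Fin K → ZMod n | s ∘ t = p} : ℝ) ≤ n ^ K / n ^ q := by
  have h := card_mul_pow_card_le_of_eqOn {s : Fin K → ZMod n | s ∘ t = p} (univ.map t)
    fun s hs s' hs' u hu => by
      obtain ⟨k, -, rfl⟩ := mem_map.1 hu
      exact (congrFun (mem_filter.1 hs).2 k).trans (congrFun (mem_filter.1 hs').2 k).symm
  rw [ZMod.card, card_map, card_univ, Fintype.card_fin, Fintype.card_fin] at h
  rw [le_div_iff₀ (pow_pos (by exact_mod_cast Nat.pos_of_neZero n) q)]
  exact_mod_cast h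

end Matching

section Model

open MeasureTheory ProbabilityTheory
open scoped ENNReal

lemma SSE.measure_starts_eq (M : SSE n K L δ) (p : Fin K → ZMod n) :
    M.μ {ω | ∀ i, M.S i ω = p i} = ((n : ℝ≥0∞) ^ K)⁻¹ := by
  have hprod := (M.indep.precomp Sum.inl_injective).meas_iInter
    (s := fun i => M.S i ⁻¹' {p i}) fun i => ⟨{p i}, MeasurableSpace.measurableSet_top, rfl⟩
  have hset : {ω | ∀ i, M.S i ω = p i} = ⋂ i, M.S i ⁻¹' {p i} := by ext; simp
  rw [hset, hprod]
  simp only [Set.preimage, Set.mem_singleton_iff, M.unifS, prod_const, card_univ,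
    Fintype.card_fin, ENNReal.inv_pow]

def SSEX.startsInput (M : SSEX n K L δ) (ω : M.Ω) : (Fin K → ZMod n) × (ZMod n → Bool) :=
  (fun i => M.S i ω, M.X ω)

lemma SSEX.measure_startsInput_preimage_singleton [NeZero n] (M : SSEX n K L δ)
    (y : (Fin K → ZMod n) × (ZMod n → Bool)) :
    M.μ (M.startsInput ⁻¹' {y}) = ((n : ℝ≥0∞) ^ K)⁻¹ * ((2 : ℝ≥0∞) ^ n)⁻¹ := by
  have hsplit : M.startsInput ⁻¹' {y} = M.X ⁻¹' {y.2} ∩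
      (fun ω => (fun i => M.S i ω, fun i j => M.E i j ω)) ⁻¹' (Prod.fst ⁻¹' {y.1}) := by
    ext ω
    simp [SSEX.startsInput, Prod.ext_iff, and_comm]
  rw [hsplit, M.indepX.measure_inter_preimage_eq_mul _ _ (measurableSet_singleton _)
    (measurable_fst (measurableSet_singleton _))]
  have hX : M.μ (M.X ⁻¹' {y.2}) = ((2 : ℝ≥0∞) ^ n)⁻¹ := M.unifX y.2
  have hS : M.μ ((fun ω => (fun i => M.S i ω, fun i j => M.E i j ω)) ⁻¹' (Prod.fst ⁻¹' {y.1}))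
      = ((n : ℝ≥0∞) ^ K)⁻¹ := by
    rw [← M.measure_starts_eq y.1]
    congr 1
    ext ω
    simp [funext_iff]
  rw [hX, hS, mul_comm]

theorem SSEX.measureReal_startsInput_mem [NeZero n] (M : SSEX n K L δ)
    (A : Finset ((Fin K → ZMod n) × (ZMod n → Bool))) :
    M.μ.real {ω | M.startsInput ω ∈ A} = #A / (n ^ K * 2 ^ n) := by
  have hmeas : Measurable M.startsInput :=
    (measurable_pi_lambda _ fun i => M.measS i).prodMk M.measX
  change M.μ.real (M.startsInput ⁻¹' A) = _
  rw [← sum_measureReal_preimage_singleton A fun y _ => hmeas (measurableSet_singleton y)]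
  simp only [measureReal_def, M.measure_startsInput_preimage_singleton, sum_const,
    nsmul_eq_mul]
  rw [ENNReal.toReal_mul, ENNReal.toReal_inv, ENNReal.toReal_inv, div_eq_mul_inv, mul_inv]
  simp

end Model

section Tail

open scoped Classical
open MeasureTheory

variable {l : ℕ}

/-- `M_z` as a function of the start positions and the input string. -/
def matchCount (z : Fin l → Option Bool) (y : (Fin K → ZMod n) × (ZMod n → Bool)) : ℕ :=
  #{i | ZMatches y.2 z (y.1 i)}

variable [NeZero n]

lemma card_filter_forall_zMatches_comp_le (z : Fin l → Option Bool) {q : ℕ}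
    (t : Fin q ↪ Fin K) :
    (#{y : (Fin K → ZMod n) × (ZMod n → Bool) | ∀ k, ZMatches y.2 z (y.1 (t k))} : ℝ)
      ≤ n ^ K * 2 ^ n * (2⁻¹ ^ #(zSupport n z) + #(zSupport n z) ^ 2 * q / n) ^ q := by
  set J := zSupport n z
  have hn : (0 : ℝ) < n := by exact_mod_cast Nat.pos_of_neZero n
  have hsub : ({y | ∀ k, ZMatches y.2 z (y.1 (t k))} :
        Finset ((Fin K → ZMod n) × (ZMod n → Bool))) ⊆ univ.biUnion fun p : Fin q → ZMod n =>
        ({s | s ∘ t = p} : Finset (Fin K → ZMod n)) ×ˢ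
          ({x | ∀ k, ZMatches x z (p k)} : Finset (ZMod n → Bool)) := by
    intro y hy
    simp only [mem_filter, mem_univ, true_and] at hy
    simp only [mem_biUnion, mem_univ, true_and, mem_product, mem_filter]
    exact ⟨y.1 ∘ t, rfl, hy⟩
  calc (#{y : (Fin K → ZMod n) × (ZMod n → Bool) | ∀ k, ZMatches y.2 z (y.1 (t k))} : ℝ)
      ≤ ∑ p : Fin q → ZMod n, (#{s : Fin K → ZMod n | s ∘ t = p} : ℝ) *
          #{x : ZMod n → Bool | ∀ k, ZMatches x z (p k)} := by
        have := (card_le_card hsub).trans card_biUnion_le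
        simp only [card_product] at this
        exact_mod_cast this
    _ ≤ ∑ p : Fin q → ZMod n, (n ^ K / n ^ q : ℝ) * (2 ^ n * 2⁻¹ ^ #(windowCover J p)) := by
        gcongr with p
        · exact card_filter_comp_eq_le t p
        · exact card_filter_forall_zMatches_le z p
    _ = n ^ K * 2 ^ n / n ^ q * ∑ p : Fin q → ZMod n, (2⁻¹ : ℝ) ^ #(windowCover J p) := by
        rw [mul_sum]
        exact sum_congr rfl fun p _ => by ring
    _ ≤ n ^ K * 2 ^ n / n ^ q * (n * 2⁻¹ ^ #J + #J ^ 2 * q) ^ q := by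
        gcongr
        simpa [ZMod.card] using sum_inv_two_pow_card_windowCover_le J q
    _ = n ^ K * 2 ^ n * (2⁻¹ ^ #J + #J ^ 2 * q / n) ^ q := by
        have : (2⁻¹ ^ #J + #J ^ 2 * q / n : ℝ) = (n * 2⁻¹ ^ #J + #J ^ 2 * q) / n := by
          field_simp
        rw [this, div_pow]
        ring

lemma pow_mul_card_filter_le_matchCount_le (z : Fin l → Option Bool) (T q : ℕ) :
    ((T + 1 - q : ℕ) : ℝ) ^ q * #{y : (Fin K → ZMod n) × (ZMod n → Bool) | T ≤ matchCount z y}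
      ≤ K ^ q * (n ^ K * 2 ^ n * (2⁻¹ ^ #(zSupport n z) + #(zSupport n z) ^ 2 * q / n) ^ q) := by
  calc ((T + 1 - q : ℕ) : ℝ) ^ q * #{y : (Fin K → ZMod n) × (ZMod n → Bool) | T ≤ matchCount z y}
      ≤ ∑ t : Fin q ↪ Fin K,
          (#{y : (Fin K → ZMod n) × (ZMod n → Bool) | ∀ k, ZMatches y.2 z (y.1 (t k))} : ℝ) := by
        exact_mod_cast pow_mul_card_filter_le_sum_embedding
          (fun (y : (Fin K → ZMod n) × (ZMod n → Bool)) i => ZMatches y.2 z (y.1 i)) T q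
    _ ≤ ∑ _t : Fin q ↪ Fin K,
          (n ^ K * 2 ^ n * (2⁻¹ ^ #(zSupport n z) + #(zSupport n z) ^ 2 * q / n) ^ q : ℝ) :=
        sum_le_sum fun t _ => card_filter_forall_zMatches_comp_le z t
    _ ≤ K ^ q * (n ^ K * 2 ^ n * (2⁻¹ ^ #(zSupport n z) + #(zSupport n z) ^ 2 * q / n) ^ q) := by
        rw [sum_const, card_univ, Fintype.card_embedding_eq, Fintype.card_fin, Fintype.card_fin,
          nsmul_eq_mul]
        gcongr
        exact_mod_cast Nat.descFactorial_le_pow K q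

theorem SSEX.pow_mul_measureReal_le_Mz_le (M : SSEX n K L δ) (hln : l ≤ n)
    (z : Fin l → Option Bool) (T q : ℕ) :
    ((T + 1 - q : ℕ) : ℝ) ^ q * M.μ.real {ω | T ≤ M.Mz ω z}
      ≤ (K * (2⁻¹ ^ sizeZ z + sizeZ z ^ 2 * q / n)) ^ q := by
  have hpos : (0 : ℝ) < n ^ K * 2 ^ n := by
    have : (0 : ℝ) < n := by exact_mod_cast Nat.pos_of_neZero n
    positivity
  have hset : {ω | T ≤ M.Mz ω z} = {ω | M.startsInput ω ∈
      ({y | T ≤ matchCount z y} : Finset ((Fin K → ZMod n) × (ZMod n → Bool)))} := by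
    ext ω
    simp only [Set.mem_ofPred_eq, mem_filter, mem_univ, true_and]
    rfl
  rw [hset, M.measureReal_startsInput_mem, ← card_zSupport hln z, mul_pow, ← mul_div_assoc,
    div_le_iff₀ hpos]
  calc _ ≤ _ := pow_mul_card_filter_le_matchCount_le z T q
    _ = _ := by ring

end Tail

lemma inv_two_pow_le_rpow_div {x ε : ℝ} (hx : 0 < x) {σ : ℕ}
    (hσ : (1 - ε) * Real.logb 2 x ≤ σ) : (2⁻¹ : ℝ) ^ σ ≤ x ^ ε / x := by
  have hx' : x ^ (1 - ε) ≤ 2 ^ σ := by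
    calc x ^ (1 - ε) = (2 : ℝ) ^ ((1 - ε) * Real.logb 2 x) := by
          rw [mul_comm, Real.rpow_mul zero_le_two, Real.rpow_logb two_pos (by norm_num) hx]
      _ ≤ (2 : ℝ) ^ (σ : ℝ) := Real.rpow_le_rpow_of_exponent_le one_le_two hσ
      _ = 2 ^ σ := Real.rpow_natCast 2 σ
  rw [← Real.rpow_sub_one hx.ne', ← neg_sub, Real.rpow_neg hx.le, inv_pow]
  exact inv_anti₀ (Real.rpow_pos_of_pos hx _) hx'

lemma half_le_ceil_add_one_sub {x : ℝ} {q : ℕ} (h2q : 2 * q ≤ x) :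
    x / 2 ≤ ((⌈x⌉₊ + 1 - q : ℕ) : ℝ) := by
  have hx : x ≤ ⌈x⌉₊ := Nat.le_ceil x
  have hq : q ≤ ⌈x⌉₊ := by exact_mod_cast (by linarith : (q : ℝ) ≤ ⌈x⌉₊)
  push_cast [Nat.sub_add_comm hq, Nat.cast_sub hq]
  linarith

lemma sizeZ_le {l : ℕ} (z : Fin l → Option Bool) : sizeZ z ≤ l :=
  (card_filter_le _ _).trans_eq (card_fin l)

section Regime

open MeasureTheory

variable {l : ℕ} {ε : ℝ}

lemma SSEX.measureReal_rpow_le_Mz_le [NeZero n] (M : SSEX n K L δ) (hn : 2 ≤ n) (hln : l ≤ n)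
    (z : Fin l → Option Bool) (hτ : 1 - ε < tauUE n z) {q : ℕ} (hlq : l ≤ q)
    (h2q : 2 * q ≤ (n : ℝ) ^ ε) (hq3 : (q : ℝ) ^ 3 ≤ (n : ℝ) ^ ε) :
    M.μ.real {ω | (n : ℝ) ^ ε ≤ M.Mz ω z} ≤ (4 * K / n) ^ q := by
  set T := ⌈(n : ℝ) ^ ε⌉₊
  have hn0 : (0 : ℝ) < n := by positivity
  have hset : {ω | (n : ℝ) ^ ε ≤ M.Mz ω z} = {ω | T ≤ M.Mz ω z} := by
    ext ω
    exact (Nat.ceil_le (a := (n : ℝ) ^ ε)).symm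
  have hσl : (sizeZ z : ℝ) ≤ q := by exact_mod_cast (sizeZ_le z).trans hlq
  have hsize : (2⁻¹ : ℝ) ^ sizeZ z ≤ (n : ℝ) ^ ε / n := by
    refine inv_two_pow_le_rpow_div hn0 ?_
    have hlog : 0 < Real.logb 2 n := Real.logb_pos one_lt_two (by exact_mod_cast hn)
    exact ((lt_div_iff₀ hlog).1 hτ).le
  have hbase : (K : ℝ) * (2⁻¹ ^ sizeZ z + sizeZ z ^ 2 * q / n) ≤ n ^ ε / 2 * (4 * K / n) := by
    have : (sizeZ z : ℝ) ^ 2 * q ≤ (n : ℝ) ^ ε :=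
      calc (sizeZ z : ℝ) ^ 2 * q ≤ (q : ℝ) ^ 2 * q := by gcongr
        _ = (q : ℝ) ^ 3 := by ring
        _ ≤ (n : ℝ) ^ ε := hq3
    calc (K : ℝ) * (2⁻¹ ^ sizeZ z + sizeZ z ^ 2 * q / n)
        ≤ K * (n ^ ε / n + n ^ ε / n) := by gcongr
      _ = n ^ ε / 2 * (4 * K / n) := by ring
  have htail := M.pow_mul_measureReal_le_Mz_le hln z T q
  rw [hset]
  refine le_of_mul_le_mul_left (a := ((n : ℝ) ^ ε / 2) ^ q) ?_ (by positivity)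
  calc ((n : ℝ) ^ ε / 2) ^ q * M.μ.real {ω | T ≤ M.Mz ω z}
      ≤ ((T + 1 - q : ℕ) : ℝ) ^ q * M.μ.real {ω | T ≤ M.Mz ω z} := by
        gcongr
        exact half_le_ceil_add_one_sub h2q
    _ ≤ (K * (2⁻¹ ^ sizeZ z + sizeZ z ^ 2 * q / n)) ^ q := htail
    _ ≤ (n ^ ε / 2 * (4 * K / n)) ^ q := by gcongr
    _ = ((n : ℝ) ^ ε / 2) ^ q * (4 * K / n) ^ q := mul_pow _ _ _

theorem SSEX.measureReal_exists_Mz_le [NeZero n] (M : SSEX n K L δ) (hn : 2 ≤ n) (hLn : L ≤ n)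
    (h2L : 2 * L ≤ (n : ℝ) ^ ε) (hL3 : (L : ℝ) ^ 3 ≤ (n : ℝ) ^ ε) :
    M.μ.real {ω | ∃ l ∈ Icc 1 L, ∃ z : Fin l → Option Bool,
        1 - ε < tauUE n z ∧ (n : ℝ) ^ ε ≤ M.Mz ω z} ≤ 3 * (12 * K / n) ^ L := by
  set B : ∀ l, (Fin l → Option Bool) → Set M.Ω :=
    fun l z => {ω | 1 - ε < tauUE n z ∧ (n : ℝ) ^ ε ≤ M.Mz ω z}
  have hB (l : ℕ) (hl : l ∈ Icc 1 L) (z : Fin l → Option Bool) :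
      M.μ.real (B l z) ≤ (4 * K / n) ^ L := by
    by_cases hτ : 1 - ε < tauUE n z
    · refine (measureReal_mono fun ω hω => hω.2).trans ?_
      exact M.measureReal_rpow_le_Mz_le hn ((mem_Icc.1 hl).2.trans hLn) z hτ
        (mem_Icc.1 hl).2 h2L hL3
    · have : B l z = ∅ := Set.eq_empty_of_forall_notMem fun ω hω => hτ hω.1
      rw [this, measureReal_empty]
      positivity
  have hunion : {ω | ∃ l ∈ Icc 1 L, ∃ z : Fin l → Option Bool,
      1 - ε < tauUE n z ∧ (n : ℝ) ^ ε ≤ M.Mz ω z} = ⋃ l ∈ Icc 1 L, ⋃ z ∈ univ, B l z := by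
    ext ω; simp [B]
  have hgeom : ∑ l ∈ Icc 1 L, (3 : ℝ) ^ l ≤ 3 ^ (L + 1) := by
    exact_mod_cast (Nat.geomSum_lt (by norm_num : 2 ≤ 3) fun l hl =>
      Nat.lt_succ_of_le (mem_Icc.1 hl).2).le
  calc M.μ.real {ω | ∃ l ∈ Icc 1 L, ∃ z : Fin l → Option Bool,
        1 - ε < tauUE n z ∧ (n : ℝ) ^ ε ≤ M.Mz ω z}
      ≤ ∑ l ∈ Icc 1 L, ∑ z : Fin l → Option Bool, M.μ.real (B l z) := by
        rw [hunion]
        exact (measureReal_biUnion_finset_le _ _).trans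
          (sum_le_sum fun l _ => measureReal_biUnion_finset_le _ _)
    _ ≤ ∑ l ∈ Icc 1 L, ∑ _z : Fin l → Option Bool, (4 * K / n : ℝ) ^ L :=
        sum_le_sum fun l hl => sum_le_sum fun z _ => hB l hl z
    _ = (∑ l ∈ Icc 1 L, (3 : ℝ) ^ l) * (4 * K / n) ^ L := by
        simp [sum_mul]
    _ ≤ 3 ^ (L + 1) * (4 * K / n) ^ L := by gcongr
    _ = 3 * (12 * K / n) ^ L := by
        rw [pow_succ, mul_comm _ (3 : ℝ), mul_assoc, ← mul_pow]
        ring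

end Regime

section Asymptotics

open Asymptotics

variable {c Lbar : ℝ}

lemma Lof_lt (hLbar : 0 < Lbar) (n : ℕ) : (Lof Lbar n : ℝ) < Lbar * Real.logb 2 n + 1 :=
  Nat.ceil_lt_add_one <| mul_nonneg hLbar.le <|
    div_nonneg (Real.log_natCast_nonneg n) (Real.log_nonneg one_le_two)

lemma tendsto_Lof_atTop (hLbar : 0 < Lbar) : Tendsto (Lof Lbar) atTop atTop :=
  tendsto_nat_ceil_atTop.comp <| ((Real.tendsto_logb_atTop one_lt_two).comp
    tendsto_natCast_atTop_atTop).const_mul_atTop hLbar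

lemma isLittleO_Lof (hLbar : 0 < Lbar) {e : ℝ} (he : 0 < e) :
    (fun n : ℕ => (Lof Lbar n : ℝ)) =o[atTop] fun n => (n : ℝ) ^ e := by
  have hlog : (fun n : ℕ => Lbar * Real.logb 2 n + 1) =o[atTop] fun n => (n : ℝ) ^ e := by
    refine IsLittleO.add ?_ ((isLittleO_one_left_iff ℝ).2 ?_)
    · have : (fun n : ℕ => Lbar * Real.logb 2 n) =
          fun n : ℕ => Lbar / Real.log 2 * Real.log n := by
        ext n; rw [Real.logb]; ring
      rw [this]
      exact ((isLittleO_log_rpow_atTop he).comp_tendsto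
        tendsto_natCast_atTop_atTop).const_mul_left _
    · exact tendsto_norm_atTop_atTop.comp <|
        (tendsto_rpow_atTop he).comp tendsto_natCast_atTop_atTop
  refine IsBigO.trans_isLittleO (IsBigO.of_bound 1 (Eventually.of_forall fun n => ?_)) hlog
  rw [one_mul, Real.norm_natCast]
  exact (Lof_lt hLbar n).le.trans (Real.le_norm_self _)

lemma eventually_Lof_le_mul_rpow (hLbar : 0 < Lbar) {e C : ℝ} (he : 0 < e) (hC : 0 < C) :
    ∀ᶠ n : ℕ in atTop, (Lof Lbar n : ℝ) ≤ C * (n : ℝ) ^ e := by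
  filter_upwards [(isLittleO_Lof hLbar he).bound hC] with n hn
  rwa [Real.norm_natCast, Real.norm_of_nonneg (by positivity)] at hn

lemma tendsto_Kof_div (hc : 0 < c) (hLbar : 0 < Lbar) :
    Tendsto (fun n : ℕ => (Kof c Lbar n : ℝ) / n) atTop (nhds 0) := by
  have hbound : Tendsto (fun n : ℕ => c / (Lof Lbar n : ℝ) + 1 / n) atTop (nhds 0) := by
    simpa using (tendsto_const_nhds.div_atTop (tendsto_natCast_atTop_atTop.comp
      (tendsto_Lof_atTop hLbar))).add (tendsto_one_div_atTop_nhds_zero_nat (𝕜 := ℝ))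
  refine squeeze_zero (fun n => by positivity) (fun n => ?_) hbound
  rcases Nat.eq_zero_or_pos n with rfl | hn
  · simp only [CharP.cast_eq_zero, div_zero]
    positivity
  · have : (Kof c Lbar n : ℝ) < c * n / Lof Lbar n + 1 := Nat.ceil_lt_add_one (by positivity)
    rw [div_le_iff₀ (by positivity)]
    calc (Kof c Lbar n : ℝ) ≤ c * n / Lof Lbar n + 1 := this.le
      _ = (c / Lof Lbar n + 1 / n) * n := by field_simp

end Asymptotics

theorem Mz_bound_large_general
    (c Lbar δ : ℝ) (hc : 0 < c) (hLbar : 0 < Lbar)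
    (model : ∀ n : ℕ, 2 ≤ n → SSEX n (Kof c Lbar n) (Lof Lbar n) δ)
    (ε : ℝ) (hε : 0 < ε) :
    Tendsto (fun n : ℕ =>
        if h : 2 ≤ n then
          ((model n h).μ {ω | ∃ l ∈ Finset.Icc 1 (Lof Lbar n),
            ∃ z : Fin l → Option Bool,
              1 - ε < tauUE n z ∧ (n : ℝ) ^ (ε : ℝ) ≤ ((model n h).Mz ω z : ℝ)}).toReal
        else 0) atTop (nhds 0) := by
  have hK := tendsto_Kof_div hc hLbar
  refine squeeze_zero' (Eventually.of_forall fun n => ?_) ?_ (by simpa using hK.const_mul 36)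
  · split_ifs <;> positivity
  filter_upwards [eventually_ge_atTop 2, (tendsto_Lof_atTop hLbar).eventually_ge_atTop 1,
    hK.eventually (ge_mem_nhds (by norm_num : (0 : ℝ) < 1 / 12)),
    eventually_Lof_le_mul_rpow hLbar one_pos one_pos,
    eventually_Lof_le_mul_rpow hLbar hε (half_pos one_pos),
    eventually_Lof_le_mul_rpow hLbar (div_pos hε three_pos) one_pos]
    with n hn hL1 hKn hLn h2L hL3
  have : NeZero n := ⟨by omega⟩
  have hL3' : (Lof Lbar n : ℝ) ^ 3 ≤ (n : ℝ) ^ ε := by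
    calc (Lof Lbar n : ℝ) ^ 3 ≤ ((n : ℝ) ^ (ε / 3)) ^ 3 := by gcongr; linarith
      _ = (n : ℝ) ^ ε := by rw [← Real.rpow_natCast, ← Real.rpow_mul (by positivity)]; norm_num
  rw [dif_pos hn]
  calc _ ≤ 3 * (12 * (Kof c Lbar n : ℝ) / n) ^ Lof Lbar n :=
        (model n hn).measureReal_exists_Mz_le hn
          (by exact_mod_cast (by simpa using hLn : (Lof Lbar n : ℝ) ≤ n)) (by linarith) hL3'
    _ ≤ 3 * (12 * (Kof c Lbar n : ℝ) / n) := by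
        gcongr
        refine pow_le_of_le_one (by positivity) ?_ (by omega)
        rw [mul_div_assoc]
        linarith
    _ = 36 * ((Kof c Lbar n : ℝ) / n) := by ring

/-- Bound on M_z for large effective size (Lemma 3, part b). -/
theorem Mz_bound_large
    (c Lbar δ : ℝ) (hc : 0 < c) (hLbar : 0 < Lbar) (hδ0 : 0 ≤ δ) (hδ1 : δ < 1)
    (model : ∀ n : ℕ, 2 ≤ n → SSEX n (Kof c Lbar n) (Lof Lbar n) δ)
    (ε : ℝ) (hε : 0 < ε) :
    Tendsto (fun n : ℕ =>
        if h : 2 ≤ n then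
          ((model n h).μ {ω | ∃ l ∈ Finset.Icc 1 (Lof Lbar n),
            ∃ z : Fin l → Option Bool,
              1 - ε < tauUE n z ∧ (n : ℝ) ^ (ε : ℝ) ≤ ((model n h).Mz ω z : ℝ)}).toReal
        else 0) atTop (nhds 0) :=
  Mz_bound_large_general c Lbar δ hc hLbar model ε hε
end
end
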